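/- Let k be a commutative Noetherian ring, let T be a triangulated k-category, and let H : T → k-Mod be a cohomological (homological) functor with values in finitely generated k-modules; set H^j := H ∘ (−[j]) for each integer j. Suppose that for each object X of T there is an integer n = n_X such that H^j(X) = 0 for all j > n. If Z →(v,u)ᵗ Z ⊕ M → N → Z[1] is a distinguished triangle in T and N ⪯_Δ M, then for every integer j the long exact sequence of H applied to this triangle breaks into short exact sequences 0 → H^j(Z) → H^j(Z) ⊕ H^j(M) → H^j(N) → 0, and each of these short exact sequences remains exact after applying the functor Hom_k(−, Y) for any k-module Y of finite length. -/

import Mathlib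

open CategoryTheory Limits Pretriangulated

universe v u w

section DeltaRelation

variable (T : Type u) [Category.{v} T] [Preadditive T] [HasZeroObject T]
  [HasShift T ℤ] [∀ n : ℤ, (shiftFunctor T n).Additive] [Pretriangulated T]

/-- One step of triangle degeneration: `X ≤_Δ Y` in one step when there are an object `Z`
and a distinguished triangle `Z → Z ⊞ X → Y → Z⟦1⟧`. -/
def deltaStep (X Y : T) : Prop :=
  ∃ (Z : T) (v : Z ⟶ Z) (u : Z ⟶ X) (w : Z ⊞ X ⟶ Y) (d : Y ⟶ Z⟦(1:ℤ)⟧),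
    Triangle.mk (biprod.lift v u) w d ∈ distTriang T

/-- `⪯_Δ` : the smallest transitive relation containing `deltaStep`. -/
def deltaLE (X Y : T) : Prop :=
  Relation.TransGen (deltaStep T) X Y

end DeltaRelation

universe u' w'



section Flen

variable {R : Type*} [Ring R]

/-- Length of a module, as height of `⊤` in the submodule lattice. -/
noncomputable def flen (R : Type*) (M : Type*) [Ring R] [AddCommGroup M] [Module R M] : ℕ∞ :=
  Order.height (⊤ : Submodule R M)

variable {M N : Type*} [AddCommGroup M] [Module R M] [AddCommGroup N] [Module R N]

lemma LTSeries.length_le_flen (p : LTSeries (Submodule R M)) :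
    (p.length : ℕ∞) ≤ flen R M :=
  Order.length_le_height (le_top)

lemma flen_of_subsingleton (h : Subsingleton M) : flen R M = 0 := by
  rw [flen, Order.height_eq_zero]
  intro b _
  have : Subsingleton (Submodule R M) := by
    constructor; intro a b; ext x; simp [Subsingleton.elim x 0]
  exact le_of_eq (Subsingleton.elim _ _)

lemma subsingleton_of_flen_zero (h : flen R M = 0) : Subsingleton M := by
  rw [flen, Order.height_eq_zero] at h
  have : (⊤ : Submodule R M) ≤ ⊥ := h bot_le
  constructor
  intro a b
  have ha : a ∈ (⊥ : Submodule R M) := this trivial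
  have hb : b ∈ (⊥ : Submodule R M) := this trivial
  simp only [Submodule.mem_bot] at ha hb
  rw [ha, hb]

lemma flen_le_of_injective (f : M →ₗ[R] N) (hf : Function.Injective f) :
    flen R M ≤ flen R N := by
  refine le_trans (Order.height_le_height_apply_of_strictMono (Submodule.map f)
    (Submodule.map_strictMono_of_injective hf) ⊤) (Order.height_mono le_top)

lemma flen_le_of_surjective (f : M →ₗ[R] N) (hf : Function.Surjective f) :
    flen R N ≤ flen R M := by
  have hsm : StrictMono (Submodule.comap f) := by
    intro a b hab
    refine lt_of_le_of_ne (Submodule.comap_mono hab.le) (fun h => hab.ne ?_)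
    have := congrArg (Submodule.map f) h
    rwa [Submodule.map_comap_eq_of_surjective hf, Submodule.map_comap_eq_of_surjective hf] at this
  have := Order.height_le_height_apply_of_strictMono (Submodule.comap f) hsm ⊤
  refine le_trans ?_ (Order.height_mono (le_top (a := Submodule.comap f ⊤)))
  simpa [flen] using this

lemma flen_congr (e : M ≃ₗ[R] N) : flen R M = flen R N :=
  le_antisymm (flen_le_of_injective e.toLinearMap e.injective)
    (flen_le_of_surjective e.toLinearMap e.surjective)

lemma flen_dichotomy (N' : Submodule R M) {x y : Submodule R M} (h : x < y) :
    Submodule.comap N'.subtype x < Submodule.comap N'.subtype y ∨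
      Submodule.map N'.mkQ x < Submodule.map N'.mkQ y := by
  rw [or_iff_not_imp_left]
  intro h1
  have c_eq : Submodule.comap N'.subtype x = Submodule.comap N'.subtype y :=
    ((Submodule.comap_mono h.le).lt_or_eq).resolve_left h1
  refine lt_of_le_of_ne (Submodule.map_mono h.le) (fun m_eq => h.ne ?_)
  refine le_antisymm h.le ?_
  intro b hb
  have : N'.mkQ b ∈ Submodule.map N'.mkQ x := by
    rw [m_eq]; exact ⟨b, hb, rfl⟩
  obtain ⟨a, ha, hab⟩ := this
  have hba : b - a ∈ N' := by
    rw [← Submodule.Quotient.eq]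
    simpa [Submodule.mkQ_apply] using hab.symm
  have : (⟨b - a, hba⟩ : N') ∈ Submodule.comap N'.subtype y := by
    simpa using sub_mem hb (h.le ha)
  rw [← c_eq] at this
  have hx : b - a ∈ x := this
  simpa using add_mem hx ha

end Flen
section T
variable {R : Type*} [Ring R] {M : Type*} [AddCommGroup M] [Module R M]

lemma flen_split_aux (N' : Submodule R M) :
    ∀ (n : ℕ) (p : LTSeries (Submodule R M)), p.length = n →
      (p.length : ℕ∞) ≤ Order.height (Submodule.comap N'.subtype p.last) +
        Order.height (Submodule.map N'.mkQ p.last) := by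
  intro n
  induction n with
  | zero => intro p hp; simp [hp]
  | succ n ih =>
    intro p hp
    have hne : p.length ≠ 0 := by omega
    have hlt : p.eraseLast.last < p.last := p.eraseLast_last_rel_last hne
    have hlen : p.eraseLast.length = n := by simp [hp]
    have IH := ih p.eraseLast hlen
    rw [hlen] at IH
    have mono1 : Order.height (Submodule.comap N'.subtype p.eraseLast.last) ≤
        Order.height (Submodule.comap N'.subtype p.last) :=
      Order.height_mono (Submodule.comap_mono hlt.le)
    have mono2 : Order.height (Submodule.map N'.mkQ p.eraseLast.last) ≤
        Order.height (Submodule.map N'.mkQ p.last) :=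
      Order.height_mono (Submodule.map_mono hlt.le)
    rw [hp]
    push_cast
    by_cases htop1 : Order.height (Submodule.comap N'.subtype p.last) = ⊤
    · rw [htop1]; simp [top_add]
    by_cases htop2 : Order.height (Submodule.map N'.mkQ p.last) = ⊤
    · rw [htop2]; simp [add_top]
    rcases flen_dichotomy N' hlt with hd | hd
    · have h1 : Order.height (Submodule.comap N'.subtype p.eraseLast.last) + 1 ≤
          Order.height (Submodule.comap N'.subtype p.last) := by
        have hfin : Order.height (Submodule.comap N'.subtype p.eraseLast.last) < ⊤ :=
          lt_of_le_of_lt mono1 (lt_top_iff_ne_top.mpr htop1)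
        have := Order.height_strictMono hd hfin
        exact Order.add_one_le_of_lt this
      calc ((n : ℕ∞) + 1)
          ≤ (Order.height (Submodule.comap N'.subtype p.eraseLast.last) +
              Order.height (Submodule.map N'.mkQ p.eraseLast.last)) + 1 := by
            exact add_le_add_left IH 1
        _ = (Order.height (Submodule.comap N'.subtype p.eraseLast.last) + 1) +
              Order.height (Submodule.map N'.mkQ p.eraseLast.last) := by ring
        _ ≤ _ := add_le_add h1 mono2
    · have h1 : Order.height (Submodule.map N'.mkQ p.eraseLast.last) + 1 ≤
          Order.height (Submodule.map N'.mkQ p.last) := by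
        have hfin : Order.height (Submodule.map N'.mkQ p.eraseLast.last) < ⊤ :=
          lt_of_le_of_lt mono2 (lt_top_iff_ne_top.mpr htop2)
        exact Order.add_one_le_of_lt (Order.height_strictMono hd hfin)
      calc ((n : ℕ∞) + 1)
          ≤ (Order.height (Submodule.comap N'.subtype p.eraseLast.last) +
              Order.height (Submodule.map N'.mkQ p.eraseLast.last)) + 1 := by
            exact add_le_add_left IH 1
        _ = Order.height (Submodule.comap N'.subtype p.eraseLast.last) +
              (Order.height (Submodule.map N'.mkQ p.eraseLast.last) + 1) := by ring
        _ ≤ _ := add_le_add mono1 h1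

lemma flen_le_add (N' : Submodule R M) :
    flen R M ≤ flen R N' + flen R (M ⧸ N') := by
  rw [flen, flen, flen]
  refine Order.height_le (fun p hp => ?_)
  refine le_trans (flen_split_aux N' p.length p rfl) ?_
  rw [hp]
  refine add_le_add (Order.height_mono le_top) (Order.height_mono le_top)

lemma flen_add_le (N' : Submodule R M) :
    flen R N' + flen R (M ⧸ N') ≤ flen R M := by
  by_cases h1 : flen R N' = ⊤
  · have : flen R N' ≤ flen R M := flen_le_of_injective N'.subtype N'.injective_subtype
    rw [h1] at this
    simp [h1, top_le_iff.mp this]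
  by_cases h2 : flen R (M ⧸ N') = ⊤
  · have : flen R (M ⧸ N') ≤ flen R M := flen_le_of_surjective N'.mkQ N'.mkQ_surjective
    rw [h2] at this
    simp [h2, top_le_iff.mp this]
  obtain ⟨n1, hn1⟩ := Option.ne_none_iff_exists'.mp h1
  obtain ⟨n2, hn2⟩ := Option.ne_none_iff_exists'.mp h2
  obtain ⟨p, hp_last, hp_len⟩ := Order.exists_series_of_height_eq_coe _ hn1
  obtain ⟨q, hq_last, hq_len⟩ := Order.exists_series_of_height_eq_coe _ hn2
  have hmap_strict : StrictMono (Submodule.map N'.subtype) :=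
    Submodule.map_strictMono_of_injective N'.injective_subtype
  have hcomap_strict : StrictMono (Submodule.comap N'.mkQ) := by
    intro a b hab
    refine lt_of_le_of_ne (Submodule.comap_mono hab.le) (fun h => hab.ne ?_)
    have := congrArg (Submodule.map N'.mkQ) h
    rwa [Submodule.map_comap_eq_of_surjective N'.mkQ_surjective,
      Submodule.map_comap_eq_of_surjective N'.mkQ_surjective] at this
  set c1 := p.map (Submodule.map N'.subtype) hmap_strict with hc1
  set c2 := q.map (Submodule.comap N'.mkQ) hcomap_strict with hc2
  have hc1_last : c1.last = N' := by
    rw [hc1, LTSeries.last_map, hp_last, Submodule.map_subtype_top]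
  have hc2_last : c2.last = ⊤ := by
    rw [hc2, LTSeries.last_map, hq_last, Submodule.comap_top]
  have hc2_head : N' ≤ c2.head := by
    rw [hc2, LTSeries.head_map]
    calc N' = Submodule.comap N'.mkQ ⊥ := by
          rw [Submodule.comap_bot, Submodule.ker_mkQ]
      _ ≤ _ := Submodule.comap_mono bot_le
  rw [hn1, hn2]
  rcases eq_or_lt_of_le hc2_head with heq | hlt
  · have hconn : c1.last = c2.head := by rw [hc1_last, heq]
    have := LTSeries.length_le_flen (c1.smash c2 hconn)
    rw [RelSeries.smash_length] at this
    have hlen : c1.length = n1 ∧ c2.length = n2 := by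
      constructor
      · rw [hc1]; exact hp_len
      · rw [hc2]; exact hq_len
    rw [hlen.1, hlen.2] at this
    exact_mod_cast this
  · have hconn : c1.last < c2.head := by rw [hc1_last]; exact hlt
    have := LTSeries.length_le_flen (c1.append c2 hconn)
    rw [RelSeries.append_length] at this
    have hlen : c1.length = n1 ∧ c2.length = n2 := by
      constructor
      · rw [hc1]; exact hp_len
      · rw [hc2]; exact hq_len
    rw [hlen.1, hlen.2] at this
    refine le_trans ?_ this
    push_cast
    calc (n1 : ℕ∞) + n2 ≤ (n1 + n2) + 1 := le_self_add
      _ = _ := by ring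

lemma flen_add (N' : Submodule R M) :
    flen R N' + flen R (M ⧸ N') = flen R M :=
  le_antisymm (flen_add_le N') (flen_le_add N')
end T
section T
variable {R : Type*} [Ring R] {M : Type*} [AddCommGroup M] [Module R M]

lemma flen_le_one_of_simple (h : IsSimpleModule R M) : flen R M ≤ 1 := by
  rw [flen]
  refine Order.height_le (fun p _ => ?_)
  by_contra hc
  push_cast at hc
  have h2 : 2 ≤ p.length := by
    by_contra h2
    push_neg at h2
    interval_cases hl : p.length <;> simp_all <;> norm_num at hc
  have h01 : p ⟨0, by omega⟩ < p ⟨1, by omega⟩ := p.strictMono (Fin.mk_lt_mk.mpr (by omega))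
  have h12 : p ⟨1, by omega⟩ < p ⟨2, by omega⟩ := p.strictMono (Fin.mk_lt_mk.mpr (by omega))
  rcases h.1.eq_bot_or_eq_top (p ⟨1, by omega⟩) with hb | ht
  · rw [hb] at h01; exact not_lt_bot h01
  · rw [ht] at h12; exact not_top_lt h12

lemma flen_ne_top_of_isFiniteLength (h : IsFiniteLength R M) : flen R M ≠ ⊤ := by
  induction h with
  | of_subsingleton => rw [flen_of_subsingleton ‹_›]; simp
  | @of_simple_quotient M _ _ N _ h ih =>
    have hle := flen_le_add N
    have h1 : flen R (M ⧸ N) ≤ 1 := flen_le_one_of_simple ‹_›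
    intro htop
    rw [htop, top_le_iff] at hle
    have : flen R ↥N + flen R (M ⧸ N) ≠ ⊤ :=
      WithTop.add_ne_top.mpr ⟨ih, by intro hh; rw [hh] at h1; exact absurd (top_le_iff.mp h1) ENat.one_ne_top⟩
    exact this hle
end T
section T
variable {R : Type*} [Ring R]
variable {M N : Type*} [AddCommGroup M] [Module R M] [AddCommGroup N] [Module R N]

lemma isFiniteLength_of_injective (f : M →ₗ[R] N) (hf : Function.Injective f)
    (h : IsFiniteLength R N) : IsFiniteLength R M := by
  obtain ⟨hn, ha⟩ := isFiniteLength_iff_isNoetherian_isArtinian.mp h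
  exact isFiniteLength_iff_isNoetherian_isArtinian.mpr
    ⟨isNoetherian_of_injective f hf, isArtinian_of_injective f hf⟩

lemma isFiniteLength_of_surjective (f : M →ₗ[R] N) (hf : Function.Surjective f)
    (h : IsFiniteLength R M) : IsFiniteLength R N := by
  obtain ⟨hn, ha⟩ := isFiniteLength_iff_isNoetherian_isArtinian.mp h
  exact isFiniteLength_iff_isNoetherian_isArtinian.mpr
    ⟨isNoetherian_of_surjective f (LinearMap.range_eq_top.mpr hf),
      isArtinian_of_surjective M f hf⟩

lemma isFiniteLength_submodule (h : IsFiniteLength R M) (p : Submodule R M) :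
    IsFiniteLength R p :=
  isFiniteLength_of_injective p.subtype p.injective_subtype h

lemma isFiniteLength_quotient (h : IsFiniteLength R M) (p : Submodule R M) :
    IsFiniteLength R (M ⧸ p) :=
  isFiniteLength_of_surjective p.mkQ p.mkQ_surjective h
end T

section Hom
variable {R : Type*} [CommRing R]
variable {M Y : Type*} [AddCommGroup M] [Module R M] [AddCommGroup Y] [Module R Y]

lemma isFiniteLength_hom [Module.Finite R M] (hY : IsFiniteLength R Y) :
    IsFiniteLength R (M →ₗ[R] Y) := by
  obtain ⟨n, π, hπ⟩ := Module.Finite.exists_fin' R M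
  obtain ⟨hno, har⟩ := isFiniteLength_iff_isNoetherian_isArtinian.mp hY
  let ev : (M →ₗ[R] Y) →ₗ[R] (Fin n → Y) :=
    { toFun := fun g i => g (π (Pi.single i 1))
      map_add' := by intros; funext i; simp
      map_smul' := by intros; funext i; simp }
  have hev : Function.Injective ev := by
    rw [← LinearMap.ker_eq_bot]
    rw [LinearMap.ker_eq_bot']
    intro g hg
    have hcomp : g.comp π = 0 := by
      refine (Pi.basisFun R (Fin n)).ext (fun i => ?_)
      have := congrFun hg i
      simpa [ev] using this
    ext m
    obtain ⟨x, rfl⟩ := hπ m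
    exact congrFun (congrArg DFunLike.coe hcomp) x
  exact isFiniteLength_of_injective ev hev
    (isFiniteLength_iff_isNoetherian_isArtinian.mpr ⟨inferInstance, inferInstance⟩)
end Hom
section Sep
variable {R : Type u'} [CommRing R]

lemma isArtinian_span_singleton_of_torsion (m : Ideal R) [hm : m.IsMaximal]
    {P : Type*} [AddCommGroup P] [Module R P] (a : P)
    (h : ∀ c ∈ m, c • a = 0) : IsArtinian R (R ∙ a) := by
  let f := LinearMap.toSpanSingleton R P a
  have hker : m ≤ LinearMap.ker f := by
    intro c hc
    simpa [f, LinearMap.toSpanSingleton] using h c hc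
  let g := Submodule.liftQ m f hker
  haveI : IsSimpleModule R (R ⧸ m) := isSimpleModule_iff_isCoatom.mpr hm.out
  haveI : Module.Finite R (R ⧸ m) := Module.Finite.of_surjective m.mkQ m.mkQ_surjective
  haveI : IsArtinian R (R ⧸ m) := inferInstance
  haveI : IsArtinian R (LinearMap.range g) := isArtinian_range g
  have hr : LinearMap.range g = R ∙ a := by
    rw [Submodule.range_liftQ]
    exact LinearMap.span_singleton_eq_range R P a ▸ rfl
  exact isArtinian_of_linearEquiv (LinearEquiv.ofEq _ _ hr)

lemma isArtinian_of_maximal_torsion (m : Ideal R) [hm : m.IsMaximal]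
    {P : Type*} [AddCommGroup P] [Module R P] [Module.Finite R P]
    (h : ∀ c ∈ m, ∀ y : P, c • y = 0) : IsArtinian R P := by
  obtain ⟨s, hs⟩ := Module.Finite.fg_top (R := R) (M := P)
  suffices H : IsArtinian R (Submodule.span R (s : Set P)) by
    rw [hs] at H
    exact isArtinian_of_linearEquiv (Submodule.topEquiv)
  clear hs
  classical
  induction s using Finset.induction with
  | empty =>
    rw [Finset.coe_empty, Submodule.span_empty]
    haveI : Subsingleton (⊥ : Submodule R P) := inferInstance
    infer_instance
  | @insert a s ha ih =>
    haveI h1 : IsArtinian R (R ∙ a) :=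
      isArtinian_span_singleton_of_torsion m a (fun c hc => h c hc a)
    haveI h2 := ih
    have : Submodule.span R (↑(insert a s) : Set P) = (R ∙ a) ⊔ Submodule.span R ↑s := by
      rw [Finset.coe_insert, Submodule.span_insert]
    rw [this]
    exact isArtinian_sup (R ∙ a) (Submodule.span R ↑s)

lemma isArtinian_of_pow_maximal_torsion [IsNoetherianRing R] (m : Ideal R) [hm : m.IsMaximal] :
    ∀ (t : ℕ) (P : Type w') [AddCommGroup P] [Module R P] [Module.Finite R P],
      (∀ c ∈ m ^ t, ∀ y : P, c • y = 0) → IsArtinian R P := by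
  intro t
  induction t with
  | zero =>
    intro P _ _ _ h
    haveI : Subsingleton P := ⟨fun a b => by
      have ha := h 1 (by simp [Ideal.one_eq_top]) a
      have hb := h 1 (by simp [Ideal.one_eq_top]) b
      rw [one_smul] at ha hb; rw [ha, hb]⟩
    infer_instance
  | succ t ih =>
    intro P _ _ _ h
    haveI : IsNoetherian R P := inferInstance
    set N : Submodule R P := m ^ t • ⊤ with hN
    haveI : Module.Finite R N := ⟨IsNoetherian.noetherian ⊤⟩
    -- N is m-torsion
    have hNt : ∀ c ∈ m, ∀ y : P, y ∈ N → c • y = 0 := by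
      intro c hc y hy
      refine Submodule.smul_induction_on hy ?_ ?_
      · intro r hr x _
        rw [smul_smul]
        exact h (c * r) (by rw [mul_comm, pow_succ]; exact Ideal.mul_mem_mul hr hc) x
      · intro x y hx hy
        rw [smul_add, hx, hy, add_zero]
    haveI hart1 : IsArtinian R N := by
      refine isArtinian_of_maximal_torsion m (fun c hc y => ?_)
      ext
      simpa using hNt c hc y y.2
    haveI hart2 : IsArtinian R (P ⧸ N) := by
      refine ih (P ⧸ N) (fun c hc y => ?_) 
      obtain ⟨a, rfl⟩ := N.mkQ_surjective y
      show c • N.mkQ a = 0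
      rw [← map_smul, Submodule.mkQ_apply, Submodule.Quotient.mk_eq_zero]
      exact Submodule.smul_mem_smul hc trivial
    exact isArtinian_of_range_eq_ker N.subtype N.mkQ
      (by rw [Submodule.range_subtype, Submodule.ker_mkQ])

/-- Separation: a nonzero element of a f.g. module over a noetherian ring survives
in some finite length quotient. -/
lemma exists_finiteLength_quotient [IsNoetherianRing R]
    {A : Type u'} [AddCommGroup A] [Module R A] [Module.Finite R A] {x : A} (hx : x ≠ 0) :
    ∃ p : Submodule R A, IsFiniteLength R (A ⧸ p) ∧ x ∉ p := by
  have hann : (LinearMap.ker (LinearMap.toSpanSingleton R A x)) ≠ ⊤ := by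
    intro h
    have : (1 : R) ∈ (LinearMap.ker (LinearMap.toSpanSingleton R A x)) := h ▸ trivial
    simp [LinearMap.mem_ker, LinearMap.toSpanSingleton_apply] at this
    exact hx this
  obtain ⟨m, hm, hle⟩ := Ideal.exists_le_maximal _ hann
  haveI := hm
  have hnot : x ∉ (⨅ i : ℕ, m ^ i • ⊤ : Submodule R A) := by
    intro hmem
    obtain ⟨r, hr⟩ := (Ideal.mem_iInf_smul_pow_eq_bot_iff m x).mp hmem
    have h1 : (1 - (r : R)) • x = 0 := by
      rw [sub_smul, one_smul, hr, sub_self]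
    have : (1 - (r : R)) ∈ m := hle h1
    have : (1 : R) ∈ m := by
      have := m.add_mem this r.2
      simpa using this
    exact hm.ne_top (m.eq_top_of_isUnit_mem this isUnit_one)
  rw [Submodule.mem_iInf] at hnot
  push_neg at hnot
  obtain ⟨t, ht⟩ := hnot
  refine ⟨m ^ t • ⊤, ?_, ht⟩
  rw [isFiniteLength_iff_isNoetherian_isArtinian]
  refine ⟨inferInstance, ?_⟩
  refine isArtinian_of_pow_maximal_torsion m t (P := A ⧸ (m ^ t • ⊤ : Submodule R A)) ?_
  intro c hc y
  obtain ⟨a, rfl⟩ := (m ^ t • ⊤ : Submodule R A).mkQ_surjective y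
  show c • (m ^ t • ⊤ : Submodule R A).mkQ a = 0
  rw [← map_smul, Submodule.mkQ_apply, Submodule.Quotient.mk_eq_zero]
  exact Submodule.smul_mem_smul hc trivial
end Sep
section Step
variable {R : Type u'} [CommRing R]
variable {A B C X Y : Type u'} [AddCommGroup A] [Module R A] [AddCommGroup B] [Module R B]
  [AddCommGroup C] [Module R C] [AddCommGroup X] [Module R X] [AddCommGroup Y] [Module R Y]

lemma flen_prod (U V : Type u') [AddCommGroup U] [Module R U] [AddCommGroup V] [Module R V] :
    flen R (U × V) = flen R U + flen R V := by
  have h := flen_add (M := U × V) (R := R) (LinearMap.ker (LinearMap.snd R U V))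
  have e1 : U ≃ₗ[R] LinearMap.ker (LinearMap.snd R U V) :=
    (LinearEquiv.ofInjective (LinearMap.inl R U V) LinearMap.inl_injective).trans
      (LinearEquiv.ofEq _ _ (LinearMap.range_inl R U V))
  have e2 : ((U × V) ⧸ LinearMap.ker (LinearMap.snd R U V)) ≃ₗ[R] V :=
    (LinearMap.quotKerEquivRange (LinearMap.snd R U V)).trans
      (LinearEquiv.ofTop _ (LinearMap.range_eq_top.mpr (fun v => ⟨(0, v), rfl⟩)))
  rw [← h, ← flen_congr e1, flen_congr e2]

theorem step_flen (α : A →ₗ[R] B) (β : B →ₗ[R] C)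
    (hexact : LinearMap.ker β = LinearMap.range α) (hβ : Function.Surjective β)
    (e : B ≃ₗ[R] A × X)
    (hY : IsFiniteLength R Y) [Module.Finite R A] [Module.Finite R X] [Module.Finite R C] :
    flen R (C →ₗ[R] Y) =
      flen R (X →ₗ[R] Y) +
        flen R ((A →ₗ[R] Y) ⧸ LinearMap.range (LinearMap.lcomp R Y α)) := by
  haveI : Module.Finite R B := Module.Finite.equiv e.symm
  set Ψ := LinearMap.lcomp R Y α with hΨ
  set Φ := LinearMap.lcomp R Y β with hΦ
  have hβα : β.comp α = 0 := by
    ext a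
    have : α a ∈ LinearMap.ker β := by rw [hexact]; exact ⟨a, rfl⟩
    simpa using this
  have hΦinj : Function.Injective Φ := by
    rw [← LinearMap.ker_eq_bot, LinearMap.ker_eq_bot']
    intro g hg
    ext c
    obtain ⟨b, rfl⟩ := hβ c
    have := congrArg (fun (h : B →ₗ[R] Y) => h b) hg
    simpa [hΦ, LinearMap.lcomp_apply] using this
  have hrange : LinearMap.range Φ = LinearMap.ker Ψ := by
    apply le_antisymm
    · rintro _ ⟨ψ, rfl⟩
      simp only [LinearMap.mem_ker, hΨ, hΦ]
      ext a
      simp only [LinearMap.lcomp_apply, LinearMap.comp_apply]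
      have : β (α a) = 0 := by
        have := congrArg (fun (h : A →ₗ[R] C) => h a) hβα
        simpa using this
      rw [this, map_zero]
      simp
    · intro φ hφ
      have hle : LinearMap.ker β ≤ LinearMap.ker φ := by
        rw [hexact]
        rintro _ ⟨a, rfl⟩
        have := congrArg (fun (h : A →ₗ[R] Y) => h a) (LinearMap.mem_ker.mp hφ)
        simpa [hΨ, LinearMap.lcomp_apply] using this
      let ψ₀ := (LinearMap.ker β).liftQ φ hle
      let εq := LinearMap.quotKerEquivOfSurjective β hβ
      refine ⟨ψ₀.comp (εq.symm : C →ₗ[R] (B ⧸ LinearMap.ker β)), ?_⟩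
      ext b
      have hsymm : εq.symm (β b) = Submodule.Quotient.mk b := by
        rw [LinearEquiv.symm_apply_eq]
        simp [εq, LinearMap.quotKerEquivOfSurjective, LinearMap.quotKerEquivRange,
          LinearEquiv.ofTop]
      simp only [hΦ, LinearMap.lcomp_apply, LinearMap.comp_apply, LinearEquiv.coe_coe, hsymm]
      simp [ψ₀, Submodule.liftQ_apply]
  -- finiteness
  have flA : IsFiniteLength R (A →ₗ[R] Y) := isFiniteLength_hom hY
  have flX : IsFiniteLength R (X →ₗ[R] Y) := isFiniteLength_hom hY
  have flC : IsFiniteLength R (C →ₗ[R] Y) := isFiniteLength_hom hY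
  have flB : IsFiniteLength R (B →ₗ[R] Y) := isFiniteLength_hom hY
  -- main identities
  have keyB : flen R (B →ₗ[R] Y) =
      flen R (C →ₗ[R] Y) + flen R (LinearMap.range Ψ) := by
    have h := flen_add (R := R) (LinearMap.ker Ψ)
    have e1 : (C →ₗ[R] Y) ≃ₗ[R] LinearMap.ker Ψ :=
      (LinearEquiv.ofInjective Φ hΦinj).trans (LinearEquiv.ofEq _ _ hrange)
    have e2 : ((B →ₗ[R] Y) ⧸ LinearMap.ker Ψ) ≃ₗ[R] LinearMap.range Ψ :=
      LinearMap.quotKerEquivRange Ψ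
    rw [← h, ← flen_congr e1, flen_congr e2]
  have keyB2 : flen R (B →ₗ[R] Y) = flen R (A →ₗ[R] Y) + flen R (X →ₗ[R] Y) := by
    have e3 : (B →ₗ[R] Y) ≃ₗ[R] ((A →ₗ[R] Y) × (X →ₗ[R] Y)) :=
      (LinearEquiv.arrowCongr e (LinearEquiv.refl R Y)).trans
        (LinearMap.coprodEquiv R).symm
    rw [flen_congr e3, flen_prod]
  have keyA : flen R (A →ₗ[R] Y) =
      flen R (LinearMap.range Ψ) +
        flen R ((A →ₗ[R] Y) ⧸ LinearMap.range Ψ) :=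
    (flen_add (R := R) (LinearMap.range Ψ)).symm
  have hrfin : flen R (LinearMap.range Ψ) ≠ ⊤ :=
    flen_ne_top_of_isFiniteLength (isFiniteLength_submodule flA _)
  -- combine
  have comb : flen R (LinearMap.range Ψ) + flen R (C →ₗ[R] Y) =
      flen R (LinearMap.range Ψ) +
        (flen R (X →ₗ[R] Y) +
          flen R ((A →ₗ[R] Y) ⧸ LinearMap.range Ψ)) := by
    have := keyB.symm.trans keyB2
    rw [keyA] at this
    -- this : flen C→Y + flen range = (range + quot) + flen X→Y
    calc flen R (LinearMap.range Ψ) + flen R (C →ₗ[R] Y)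
        = flen R (C →ₗ[R] Y) + flen R (LinearMap.range Ψ) := by ring
      _ = flen R (LinearMap.range Ψ) + flen R ((A →ₗ[R] Y) ⧸ LinearMap.range Ψ) +
            flen R (X →ₗ[R] Y) := this
      _ = _ := by ring
  exact WithTop.add_left_cancel hrfin comb

theorem step_mono (α : A →ₗ[R] B) (β : B →ₗ[R] C)
    (hexact : LinearMap.ker β = LinearMap.range α) (hβ : Function.Surjective β)
    (e : B ≃ₗ[R] A × X)
    (hY : IsFiniteLength R Y) [Module.Finite R A] [Module.Finite R X] [Module.Finite R C] :
    flen R (X →ₗ[R] Y) ≤ flen R (C →ₗ[R] Y) := by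
  rw [step_flen α β hexact hβ e hY]
  exact le_self_add

theorem step_squeeze (α : A →ₗ[R] B) (β : B →ₗ[R] C)
    (hexact : LinearMap.ker β = LinearMap.range α) (hβ : Function.Surjective β)
    (e : B ≃ₗ[R] A × X)
    (hY : IsFiniteLength R Y) [Module.Finite R A] [Module.Finite R X] [Module.Finite R C]
    (hle : flen R (C →ₗ[R] Y) ≤ flen R (X →ₗ[R] Y)) :
    Function.Surjective (LinearMap.lcomp R Y α) := by
  have heq := step_flen α β hexact hβ e hY
  have hXfin : flen R (X →ₗ[R] Y) ≠ ⊤ :=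
    flen_ne_top_of_isFiniteLength (isFiniteLength_hom hY)
  have hq : flen R ((A →ₗ[R] Y) ⧸ LinearMap.range (LinearMap.lcomp R Y α)) = 0 := by
    rw [heq] at hle
    have h0 : flen R (X →ₗ[R] Y) +
        flen R ((A →ₗ[R] Y) ⧸ LinearMap.range (LinearMap.lcomp R Y α)) ≤
        flen R (X →ₗ[R] Y) + 0 := by simpa using hle
    have h1 := WithTop.le_of_add_le_add_left hXfin h0
    exact le_antisymm h1 zero_le
  have := subsingleton_of_flen_zero hq
  have hrange : LinearMap.range (LinearMap.lcomp R Y α) = ⊤ :=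
    Submodule.Quotient.subsingleton_iff.mp this
  exact LinearMap.range_eq_top.mp hrange
end Step

section CatHelpers
variable {k : Type w} [CommRing k]
variable {T : Type u} [Category.{v} T] [Preadditive T] [HasZeroObject T]
  [HasShift T ℤ] [∀ n : ℤ, (shiftFunctor T n).Additive] [Pretriangulated T]
variable (H : T ⥤ ModuleCat.{w} k) [H.Additive]

/-- From elementwise exactness hypothesis to `IsHomological`. -/
lemma isHomological_of_exact
    (hH : ∀ Tr : Triangle T, (Tr ∈ distTriang T) →
      Function.Exact (⇑(H.map Tr.mor₁)) (⇑(H.map Tr.mor₂))) :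
    H.IsHomological := by
  constructor
  intro Tr hTr
  rw [ShortComplex.moduleCat_exact_iff]
  intro x hx
  exact ((hH Tr hTr) x).mp hx

lemma exact2_of_dist
    (hH : ∀ Tr : Triangle T, (Tr ∈ distTriang T) →
      Function.Exact (⇑(H.map Tr.mor₁)) (⇑(H.map Tr.mor₂)))
    (Tr : Triangle T) (hTr : Tr ∈ distTriang T) (j : ℤ) :
    Function.Exact (⇑(H.map ((shiftFunctor T j).map Tr.mor₁)))
      (⇑(H.map ((shiftFunctor T j).map Tr.mor₂))) := by
  haveI := isHomological_of_exact H hH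
  letI : H.ShiftSequence ℤ := Functor.ShiftSequence.tautological H ℤ
  have h := H.homologySequence_exact₂ Tr hTr j
  rw [ShortComplex.moduleCat_exact_iff] at h
  intro x
  constructor
  · intro hx
    exact h x hx
  · rintro ⟨y, rfl⟩
    have hcomp := H.homologySequence_comp Tr hTr j
    have := ConcreteCategory.congr_hom hcomp y
    exact this

lemma surj_of_inj_next
    (hH : ∀ Tr : Triangle T, (Tr ∈ distTriang T) →
      Function.Exact (⇑(H.map Tr.mor₁)) (⇑(H.map Tr.mor₂)))
    (Tr : Triangle T) (hTr : Tr ∈ distTriang T) (j : ℤ)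
    (hinj : Function.Injective (⇑(H.map ((shiftFunctor T (j+1)).map Tr.mor₁)))) :
    Function.Surjective (⇑(H.map ((shiftFunctor T j).map Tr.mor₂))) := by
  haveI := isHomological_of_exact H hH
  letI : H.ShiftSequence ℤ := Functor.ShiftSequence.tautological H ℤ
  have h3 := H.homologySequence_exact₃ Tr hTr j (j+1) rfl
  have h1 := H.homologySequence_exact₁ Tr hTr j (j+1) rfl
  rw [ShortComplex.moduleCat_exact_iff] at h3 h1
  intro c
  -- δ c = 0 because α_{j+1} is injective and α_{j+1} (δ c) = 0
  have hδc : H.homologySequenceδ Tr j (j+1) rfl c = 0 := by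
    apply hinj
    have hcomp := H.homologySequenceδ_comp Tr hTr j (j+1) rfl
    have := ConcreteCategory.congr_hom hcomp c
    exact this.trans (map_zero _).symm
  obtain ⟨b, hb⟩ := h3 c hδc
  exact ⟨b, hb⟩
end CatHelpers

section MainLayer
variable {k : Type w} [CommRing k] [IsNoetherianRing k]
variable {T : Type u} [Category.{v} T] [Preadditive T] [HasZeroObject T]
  [HasShift T ℤ] [∀ n : ℤ, (shiftFunctor T n).Additive] [Pretriangulated T]

/-- A witness for one step of triangle degeneration. -/
structure DStep (T : Type u) [Category.{v} T] [Preadditive T] [HasZeroObject T]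
    [HasShift T ℤ] [∀ n : ℤ, (shiftFunctor T n).Additive] [Pretriangulated T]
    (X X' : T) : Type (max u v) where
  Z : T
  v : Z ⟶ Z
  u : Z ⟶ X
  w : Z ⊞ X ⟶ X'
  d : X' ⟶ Z⟦(1:ℤ)⟧
  dist : Triangle.mk (biprod.lift v u) w d ∈ distTriang T

/-- Chains of degeneration steps. -/
inductive DChain (T : Type u) [Category.{v} T] [Preadditive T] [HasZeroObject T]
    [HasShift T ℤ] [∀ n : ℤ, (shiftFunctor T n).Additive] [Pretriangulated T] :
    T → T → Type (max u v)
  | single {X X' : T} (s : DStep T X X') : DChain T X X'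
  | cons {X X' X'' : T} (s : DStep T X X') (c : DChain T X' X'') : DChain T X X''

def DChain.snoc : ∀ {X X' X'' : T}, DChain T X X' → DStep T X' X'' → DChain T X X''
  | _, _, _, .single s, t => .cons s (.single t)
  | _, _, _, .cons s c, t => .cons s (c.snoc t)

lemma nonempty_dchain {X X' : T} (h : Relation.TransGen (deltaStep T) X X') :
    Nonempty (DChain T X X') := by
  induction h with
  | single h =>
    obtain ⟨Z, v, u, w, d, hd⟩ := h
    exact ⟨.single ⟨Z, v, u, w, d, hd⟩⟩
  | tail hab hbc ih =>
    obtain ⟨c⟩ := ih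
    obtain ⟨Z, v, u, w, d, hd⟩ := hbc
    exact ⟨c.snoc ⟨Z, v, u, w, d, hd⟩⟩

def DChain.Forall (P : ∀ {X X' : T}, DStep T X X' → Prop) :
    ∀ {X X' : T}, DChain T X X' → Prop
  | _, _, .single s => P s
  | _, _, .cons s c => P s ∧ c.Forall P

lemma DChain.Forall_imp {P Q : ∀ {X X' : T}, DStep T X X' → Prop}
    {X X' : T} (c : DChain T X X') (h : c.Forall P)
    (himp : ∀ {X X' : T} (s : DStep T X X'), P s → Q s) : c.Forall Q := by
  induction c with
  | single s => exact himp s h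
  | cons s c ih => exact ⟨himp s h.1, ih h.2⟩

variable (H : T ⥤ ModuleCat.{w} k) [H.Additive]

/-- The first map of the long exact sequence, at level `j`. -/
noncomputable def DStep.amap {X X' : T} (s : DStep T X X') (j : ℤ) :
    H.obj (s.Z⟦j⟧) ⟶ H.obj ((s.Z ⊞ X)⟦j⟧) :=
  H.map ((shiftFunctor T j).map (biprod.lift s.v s.u))

noncomputable def DStep.bmap {X X' : T} (s : DStep T X X') (j : ℤ) :
    H.obj ((s.Z ⊞ X)⟦j⟧) ⟶ H.obj (X'⟦j⟧) :=
  H.map ((shiftFunctor T j).map s.w)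

def InjAt (j : ℤ) {X X' : T} (s : DStep T X X') : Prop :=
  Function.Injective (s.amap H j)

noncomputable def biprodLinearEquiv (Z X : T) (j : ℤ) :
    H.obj ((Z ⊞ X)⟦j⟧) ≃ₗ[k] (H.obj (Z⟦j⟧) × H.obj (X⟦j⟧)) :=
  haveI : PreservesBinaryBiproducts (shiftFunctor T j) :=
    preservesBinaryBiproducts_of_preservesBiproducts _
  haveI : PreservesBinaryBiproducts H :=
    preservesBinaryBiproducts_of_preservesBiproducts _
  ((H.mapIso ((shiftFunctor T j).mapBiprod Z X)).trans
    ((H.mapBiprod (Z⟦j⟧) (X⟦j⟧)).trans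
      (ModuleCat.biprodIsoProd (H.obj (Z⟦j⟧)) (H.obj (X⟦j⟧))))).toLinearEquiv
end MainLayer
section ChainLemmas
variable {k : Type w} [CommRing k] [IsNoetherianRing k]
variable {T : Type u} [Category.{v} T] [Preadditive T] [HasZeroObject T]
  [HasShift T ℤ] [∀ n : ℤ, (shiftFunctor T n).Additive] [Pretriangulated T]
variable (H : T ⥤ ModuleCat.{w} k) [H.Additive]

lemma step_ker_eq_range
    (hH : ∀ Tr : Triangle T, (Tr ∈ distTriang T) →
      Function.Exact (⇑(H.map Tr.mor₁)) (⇑(H.map Tr.mor₂)))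
    {X X' : T} (s : DStep T X X') (j : ℤ) :
    LinearMap.ker (s.bmap H j).hom = LinearMap.range (s.amap H j).hom :=
  LinearMap.exact_iff.mp
    (exact2_of_dist H hH (Triangle.mk (biprod.lift s.v s.u) s.w s.d) s.dist j)

lemma step_surj
    (hH : ∀ Tr : Triangle T, (Tr ∈ distTriang T) →
      Function.Exact (⇑(H.map Tr.mor₁)) (⇑(H.map Tr.mor₂)))
    {X X' : T} (s : DStep T X X') (j : ℤ) (hinj : InjAt H (j+1) s) :
    Function.Surjective (s.bmap H j) :=
  surj_of_inj_next H hH (Triangle.mk (biprod.lift s.v s.u) s.w s.d) s.dist j hinj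

/-- `λ_Y^j(X)`. -/
noncomputable def lamH (j : ℤ) (Y : Type w) [AddCommGroup Y] [Module k Y] (X : T) : ℕ∞ :=
  flen k (H.obj (X⟦j⟧) →ₗ[k] Y)

def SurjAt (j : ℤ) (Y : Type w) [AddCommGroup Y] [Module k Y]
    {X X' : T} (s : DStep T X X') : Prop :=
  Function.Surjective (LinearMap.lcomp k Y (s.amap H j).hom)

section FixedjY
variable (hH : ∀ Tr : Triangle T, (Tr ∈ distTriang T) →
      Function.Exact (⇑(H.map Tr.mor₁)) (⇑(H.map Tr.mor₂)))
  (hfg : ∀ X : T, Module.Finite k (H.obj X))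
  (j : ℤ) (Y : Type w) [AddCommGroup Y] [Module k Y] (hY : IsFiniteLength k Y)

include hH hfg hY

lemma dstep_mono {X X' : T} (s : DStep T X X') (hinj : InjAt H (j+1) s) :
    lamH H j Y X ≤ lamH H j Y X' := by
  haveI := hfg (s.Z⟦j⟧)
  haveI := hfg (X⟦j⟧)
  haveI := hfg (X'⟦j⟧)
  exact step_mono (s.amap H j).hom (s.bmap H j).hom (step_ker_eq_range H hH s j)
    (step_surj H hH s j hinj) (biprodLinearEquiv H s.Z X j) hY

lemma dchain_mono {X X' : T} (c : DChain T X X')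
    (hc : c.Forall (fun s => InjAt H (j+1) s)) :
    lamH H j Y X ≤ lamH H j Y X' := by
  induction c with
  | @single X X' s => exact dstep_mono H hH hfg j Y hY s hc
  | @cons X Xm X' s c ih => exact (dstep_mono H hH hfg j Y hY s hc.1).trans (ih hc.2)

lemma dchain_squeeze {X X' : T} (c : DChain T X X')
    (hc : c.Forall (fun s => InjAt H (j+1) s))
    (hle : lamH H j Y X' ≤ lamH H j Y X) :
    c.Forall (fun s => SurjAt H j Y s) := by
  induction c with
  | @single X X' s =>
    haveI := hfg (s.Z⟦j⟧)
    haveI := hfg (X⟦j⟧)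
    haveI := hfg (X'⟦j⟧)
    exact step_squeeze (s.amap H j).hom (s.bmap H j).hom (step_ker_eq_range H hH s j)
      (step_surj H hH s j hc) (biprodLinearEquiv H s.Z X j) hY hle
  | @cons X Xm X' s c ih =>
    have m1 : lamH H j Y X ≤ lamH H j Y Xm := dstep_mono H hH hfg j Y hY s hc.1
    have m2 : lamH H j Y Xm ≤ lamH H j Y X' := dchain_mono H hH hfg j Y hY c hc.2
    constructor
    · haveI := hfg (s.Z⟦j⟧)
      haveI := hfg (X⟦j⟧)
      haveI := hfg (Xm⟦j⟧)
      exact step_squeeze (s.amap H j).hom (s.bmap H j).hom (step_ker_eq_range H hH s j)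
        (step_surj H hH s j hc.1) (biprodLinearEquiv H s.Z X j) hY (m2.trans hle)
    · exact ih hc.2 (hle.trans m1)
end FixedjY

/-- Swap `∀ Y` with `Forall` over a chain. -/
lemma dchain_forall_swap {X X' : T} (c : DChain T X X') (j : ℤ)
    (h : ∀ (Y : Type w) (i1 : AddCommGroup Y) (i2 : @Module k Y _ i1.toAddCommMonoid),
      IsFiniteLength k Y → c.Forall (fun s => SurjAt H j Y s)) :
    c.Forall (fun s => ∀ (Y : Type w) (i1 : AddCommGroup Y)
      (i2 : @Module k Y _ i1.toAddCommMonoid), IsFiniteLength k Y → SurjAt H j Y s) := by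
  induction c with
  | single s => exact fun Y i1 i2 hY => h Y i1 i2 hY
  | cons s c ih =>
    exact ⟨fun Y i1 i2 hY => (h Y i1 i2 hY).1, ih (fun Y i1 i2 hY => (h Y i1 i2 hY).2)⟩

lemma inj_of_all_surj
    (hfg : ∀ X : T, Module.Finite k (H.obj X))
    {X X' : T} (s : DStep T X X') (j : ℤ)
    (h : ∀ (Y : Type w) (i1 : AddCommGroup Y) (i2 : @Module k Y _ i1.toAddCommMonoid),
      IsFiniteLength k Y → SurjAt H j Y s) : InjAt H j s := by
  rw [InjAt, ← LinearMap.ker_eq_bot, LinearMap.ker_eq_bot']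
  intro x hx
  by_contra hxne
  haveI := hfg (s.Z⟦j⟧)
  obtain ⟨p, hfl, hxp⟩ := exists_finiteLength_quotient (R := k) (A := H.obj (s.Z⟦j⟧)) hxne
  obtain ⟨ψ, hψ⟩ := h (H.obj (s.Z⟦j⟧) ⧸ p) _ _ hfl p.mkQ
  have : p.mkQ x = 0 := by
    have := LinearMap.congr_fun hψ x
    simp only [LinearMap.lcomp_apply] at this
    rw [← this]
    show ψ ((s.amap H j).hom x) = 0
    rw [hx, map_zero]
  rw [Submodule.mkQ_apply, Submodule.Quotient.mk_eq_zero] at this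
  exact hxp this

lemma dchain_bound
    (hbound : ∀ X : T, ∃ n : ℤ, ∀ j > n, ∀ x : H.obj (X⟦j⟧), x = 0)
    {X X' : T} (c : DChain T X X') :
    ∃ n : ℤ, c.Forall (fun s => ∀ j > n, Subsingleton (H.obj (s.Z⟦j⟧))) := by
  induction c with
  | single s =>
    obtain ⟨n, hn⟩ := hbound s.Z
    exact ⟨n, fun j hj => ⟨fun a b => by rw [hn j hj a, hn j hj b]⟩⟩
  | cons s c ih =>
    obtain ⟨n1, hn1⟩ := hbound s.Z
    obtain ⟨n2, hn2⟩ := ih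
    refine ⟨max n1 n2, ⟨fun j hj => ⟨fun a b => by
      rw [hn1 j (lt_of_le_of_lt (le_max_left n1 n2) hj) a,
        hn1 j (lt_of_le_of_lt (le_max_left n1 n2) hj) b]⟩, ?_⟩⟩
    exact c.Forall_imp hn2 (fun s hs j hj => hs j (lt_of_le_of_lt (le_max_right n1 n2) hj))

/-- The master downward induction over a degeneration cycle. -/
lemma master
    (hH : ∀ Tr : Triangle T, (Tr ∈ distTriang T) →
      Function.Exact (⇑(H.map Tr.mor₁)) (⇑(H.map Tr.mor₂)))
    (hfg : ∀ X : T, Module.Finite k (H.obj X))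
    (hbound : ∀ X : T, ∃ n : ℤ, ∀ j > n, ∀ x : H.obj (X⟦j⟧), x = 0)
    {Mo : T} (cyc : DChain T Mo Mo) (j : ℤ) :
    cyc.Forall (fun s => InjAt H j s) := by
  obtain ⟨n, hn⟩ := dchain_bound H hbound cyc
  have base : ∀ (j : ℤ), n < j → cyc.Forall (fun s => InjAt H j s) := by
    intro j hj
    refine cyc.Forall_imp hn (fun s hs => ?_)
    haveI := hs j hj
    intro a b _
    exact Subsingleton.elim a b
  have key : ∀ (j : ℤ), cyc.Forall (fun s => InjAt H (j+1) s) →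
      cyc.Forall (fun s => InjAt H j s) := by
    intro j hnext
    have hsurj : ∀ (Y : Type w) (i1 : AddCommGroup Y)
        (i2 : @Module k Y _ i1.toAddCommMonoid), IsFiniteLength k Y →
        cyc.Forall (fun s => SurjAt H j Y s) := by
      intro Y i1 i2 hY
      exact dchain_squeeze H hH hfg j Y hY cyc hnext le_rfl
    have := dchain_forall_swap H cyc j hsurj
    exact cyc.Forall_imp this (fun s hs => inj_of_all_surj H hfg s j hs)
  have aux : ∀ (d : ℕ) (j : ℤ), n + 1 ≤ j + d → cyc.Forall (fun s => InjAt H j s) := by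
    intro d
    induction d with
    | zero => intro j hj; exact base j (by omega)
    | succ d ih =>
      intro j hj
      by_cases hd : n + 1 ≤ j + d
      · exact ih j hd
      · exact key j (ih (j+1) (by omega))
  exact aux (n + 1 - j).toNat j (by omega)
end ChainLemmas
section Factor
variable {R : Type u'} [CommRing R]
variable {A B C Y : Type u'} [AddCommGroup A] [Module R A] [AddCommGroup B] [Module R B]
  [AddCommGroup C] [Module R C] [AddCommGroup Y] [Module R Y]

lemma comp_factor (α : A →ₗ[R] B) (β : B →ₗ[R] C)
    (hexact : LinearMap.ker β = LinearMap.range α) (hβ : Function.Surjective β)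
    (φ : B →ₗ[R] Y) (hφ : φ.comp α = 0) :
    ∃ ψ : C →ₗ[R] Y, ψ.comp β = φ := by
  have hle : LinearMap.ker β ≤ LinearMap.ker φ := by
    rw [hexact]
    rintro _ ⟨a, rfl⟩
    have := LinearMap.congr_fun hφ a
    simpa using this
  let ψ₀ := (LinearMap.ker β).liftQ φ hle
  let εq := LinearMap.quotKerEquivOfSurjective β hβ
  refine ⟨ψ₀.comp (εq.symm : C →ₗ[R] (B ⧸ LinearMap.ker β)), ?_⟩
  ext b
  have hsymm : εq.symm (β b) = Submodule.Quotient.mk b := by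
    rw [LinearEquiv.symm_apply_eq]
    simp [εq, LinearMap.quotKerEquivOfSurjective, LinearMap.quotKerEquivRange,
      LinearEquiv.ofTop]
  simp only [LinearMap.comp_apply, LinearEquiv.coe_coe, hsymm]
  simp [ψ₀, Submodule.liftQ_apply]
end Factor


/-- Let `k` be a commutative Noetherian ring, `T` a triangulated
`k`-category and `H : T ⥤ k`-Mod a cohomological functor with finitely generated values,
such that for each object `X` there is `n` with `H^j(X) = 0` for all `j > n` (where
`H^j := H ∘ (−⟦j⟧)`). If `Z →(v,u)ᵗ Z ⊞ M → N → Z⟦1⟧` is a distinguished triangle and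
`N ⪯_Δ M`, then for every `j` the long exact sequence of `H` breaks into short exact
sequences `0 → H^j(Z) → H^j(Z ⊞ M) → H^j(N) → 0` which remain exact after applying
`Hom_k(−,Y)` for every `k`-module `Y` of finite length. -/
theorem stmt_13 (k : Type w) [CommRing k] [IsNoetherianRing k]
    (T : Type u) [Category.{v} T] [Preadditive T] [HasZeroObject T]
    [HasShift T ℤ] [∀ n : ℤ, (shiftFunctor T n).Additive] [Pretriangulated T]
    [IsTriangulated T] [CategoryTheory.Linear k T]
    (H : T ⥤ ModuleCat.{w} k) [H.Additive]
    (hH : ∀ Tr : Triangle T, (Tr ∈ distTriang T) →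
      Function.Exact (⇑(H.map Tr.mor₁)) (⇑(H.map Tr.mor₂)))
    (hfg : ∀ X : T, Module.Finite k (H.obj X))
    (hbound : ∀ X : T, ∃ n : ℤ, ∀ j > n, ∀ x : H.obj (X⟦j⟧), x = 0)
    (Z M N : T) (v : Z ⟶ Z) (u : Z ⟶ M) (w : Z ⊞ M ⟶ N) (d : N ⟶ Z⟦(1:ℤ)⟧)
    (hdist : Triangle.mk (biprod.lift v u) w d ∈ distTriang T)
    (hNM : deltaLE T N M) :
    ∀ j : ℤ,
      Function.Injective (H.map ((shiftFunctor T j).map (biprod.lift v u))) ∧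
      Function.Exact (H.map ((shiftFunctor T j).map (biprod.lift v u)))
        (H.map ((shiftFunctor T j).map w)) ∧
      Function.Surjective (H.map ((shiftFunctor T j).map w)) ∧
      ∀ (Y : Type w) [AddCommGroup Y] [Module k Y], IsFiniteLength k Y →
        (Function.Injective
            (fun g : ↑(H.obj (N⟦j⟧)) →ₗ[k] Y =>
              g.comp (H.map ((shiftFunctor T j).map w)).hom) ∧
          Function.Exact
            (fun g : ↑(H.obj (N⟦j⟧)) →ₗ[k] Y =>
              g.comp (H.map ((shiftFunctor T j).map w)).hom)
            (fun g : ↑(H.obj ((Z ⊞ M)⟦j⟧)) →ₗ[k] Y =>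
              g.comp (H.map ((shiftFunctor T j).map (biprod.lift v u))).hom) ∧
          Function.Surjective
            (fun g : ↑(H.obj ((Z ⊞ M)⟦j⟧)) →ₗ[k] Y =>
              g.comp (H.map ((shiftFunctor T j).map (biprod.lift v u))).hom)) := by

  intro j
  set step₀ : DStep T M N := ⟨Z, v, u, w, d, hdist⟩ with hstep₀
  obtain ⟨chainNM⟩ := nonempty_dchain hNM
  set cyc : DChain T M M := DChain.cons step₀ chainNM with hcyc
  have hInj : ∀ j' : ℤ, cyc.Forall (fun s => InjAt H j' s) :=
    fun j' => master H hH hfg hbound cyc j'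
  have hker : LinearMap.ker (step₀.bmap H j).hom = LinearMap.range (step₀.amap H j).hom :=
    step_ker_eq_range H hH step₀ j
  have hsurjβ : Function.Surjective (step₀.bmap H j) :=
    step_surj H hH step₀ j (hInj (j+1)).1
  have hβα : (step₀.bmap H j).hom.comp (step₀.amap H j).hom = 0 := by
    ext a
    have : (step₀.amap H j) a ∈ LinearMap.ker (step₀.bmap H j).hom := by
      rw [hker]; exact ⟨a, rfl⟩
    simpa using this
  refine ⟨(hInj j).1, exact2_of_dist H hH _ hdist j, hsurjβ, ?_⟩
  intro Y _ _ hYfl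
  refine ⟨?_, ?_, ?_⟩
  · -- injectivity of precomposition with β
    intro g₁ g₂ hg
    have hg' : g₁.comp (step₀.bmap H j).hom = g₂.comp (step₀.bmap H j).hom := hg
    ext x
    obtain ⟨b, rfl⟩ := hsurjβ x
    exact LinearMap.congr_fun hg' b
  · -- exactness of precompositions
    intro φ
    constructor
    · intro hφ
      have hφ' : φ.comp (step₀.amap H j).hom = 0 := hφ
      obtain ⟨ψ, hψ⟩ := comp_factor (step₀.amap H j).hom (step₀.bmap H j).hom hker hsurjβ φ hφ'
      exact ⟨ψ, hψ⟩
    · rintro ⟨ψ, rfl⟩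
      show (ψ.comp (step₀.bmap H j).hom).comp (step₀.amap H j).hom = 0
      rw [LinearMap.comp_assoc, hβα, LinearMap.comp_zero]
  · -- surjectivity of precomposition with α
    have hsq := dchain_squeeze H hH hfg j Y hYfl cyc (hInj (j+1)) le_rfl
    have hs : Function.Surjective (LinearMap.lcomp k Y (step₀.amap H j).hom) := hsq.1
    intro φ
    obtain ⟨ψ, hψ⟩ := hs φ
    exact ⟨ψ, hψ⟩
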